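/- Let n ∈ ℕ, 0 < p₁ < p₂ < ∞, and let φ : ℝ^n × [0,∞) → [0,∞) be such that φ(x,·) is an Orlicz function for every x ∈ ℝ^n and φ(·,t) is measurable for every t ∈ [0,∞), and suppose φ is of uniformly lower type p⁻ and of uniformly upper type p⁺ with p₁ < p⁻ ≤ p⁺ < p₂. Let T be a sublinear operator defined on L^{p₁}_{φ(·,1)}(ℝ^n) + L^{p₂}_{φ(·,1)}(ℝ^n) for which there exist constants C₁, C₂ > 0 such that, for i ∈ {1,2} and all α ∈ (0,∞), t ∈ (0,∞) and f ∈ L^{p_i}_{φ(·,t)}(ℝ^n), φ({x ∈ ℝ^n : |Tf(x)| > α}, t) ≤ C_i α^{−p_i} ∫_{ℝ^n} |f(x)|^{p_i} φ(x,t) dx. Then there exists a constant C > 0 such that for all f ∈ L^φ(ℝ^n), ∫_{ℝ^n} φ(x, |Tf(x)|) dx ≤ C ∫_{ℝ^n} φ(x, |f(x)|) dx; in particular, T is bounded on L^φ(ℝ^n). -/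

import Mathlib

open MeasureTheory Metric Filter
open scoped ENNReal NNReal Topology FourierTransform Classical

noncomputable section

abbrev Rn (n : ℕ) := EuclideanSpace ℝ (Fin n)

/-- An Orlicz function on `[0,∞)`. -/
structure IsOrliczFn (Φ : ℝ → ℝ) : Prop where
  mono : ∀ ⦃s t : ℝ⦄, 0 ≤ s → s ≤ t → Φ s ≤ Φ t
  map_zero : Φ 0 = 0
  pos : ∀ t : ℝ, 0 < t → 0 < Φ t
  tendsto_atTop : Filter.Tendsto Φ Filter.atTop Filter.atTop

/-- `φ` is of uniformly lower type `p`. -/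
def UniformLowerType {n : ℕ} (φ : Rn n → ℝ → ℝ) (p : ℝ) : Prop :=
  ∃ C : ℝ, 0 < C ∧ ∀ (x : Rn n) (t s : ℝ), 0 ≤ t → 0 ≤ s → s ≤ 1 →
    φ x (s * t) ≤ C * s ^ p * φ x t

/-- `φ` is of uniformly upper type `p`. -/
def UniformUpperType {n : ℕ} (φ : Rn n → ℝ → ℝ) (p : ℝ) : Prop :=
  ∃ C : ℝ, 0 < C ∧ ∀ (x : Rn n) (t s : ℝ), 0 ≤ t → 1 ≤ s →
    φ x (s * t) ≤ C * s ^ p * φ x t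

/-- The uniform Muckenhoupt condition `φ ∈ 𝔸_q(ℝⁿ)`, for `q ∈ [1,∞)`. -/
def MemUniformA {n : ℕ} (φ : Rn n → ℝ → ℝ) (q : ℝ) : Prop :=
  (q = 1 ∧ ∃ C : ℝ≥0∞, C ≠ ∞ ∧ ∀ t : ℝ, 0 ≤ t → ∀ (z : Rn n) (ρ : ℝ), 0 < ρ →
      (∫⁻ x in ball z ρ, ENNReal.ofReal (φ x t)) *
        essSup (fun y => (ENNReal.ofReal (φ y t))⁻¹) (volume.restrict (ball z ρ)) ≤
      C * volume (ball z ρ)) ∨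
  (1 < q ∧ ∃ C : ℝ≥0∞, C ≠ ∞ ∧ ∀ t : ℝ, 0 ≤ t → ∀ (z : Rn n) (ρ : ℝ), 0 < ρ →
      (∫⁻ x in ball z ρ, ENNReal.ofReal (φ x t)) *
        (∫⁻ y in ball z ρ, (ENNReal.ofReal (φ y t)) ^ (-(1 / (q - 1)))) ^ (q - 1) ≤
      C * volume (ball z ρ) ^ q)

/-- The critical index `q(φ)`. -/
def qIndex {n : ℕ} (φ : Rn n → ℝ → ℝ) : ℝ := sInf {q : ℝ | MemUniformA φ q}

/-- The index `i(φ)`. -/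
def iIndex {n : ℕ} (φ : Rn n → ℝ → ℝ) : ℝ := sSup {p : ℝ | 0 < p ∧ UniformLowerType φ p}

/-- The index `m(φ) = ⌊n (q(φ)/i(φ) - 1)⌋`. -/
def mIndex {n : ℕ} (φ : Rn n → ℝ → ℝ) : ℕ := (⌊(n : ℝ) * (qIndex φ / iIndex φ - 1)⌋).toNat

/-- A growth function. -/
structure IsGrowthFn {n : ℕ} (φ : Rn n → ℝ → ℝ) : Prop where
  orlicz : ∀ x, IsOrliczFn (φ x)
  meas : ∀ t : ℝ, Measurable fun x => φ x t
  memA : ∃ q : ℝ, MemUniformA φ q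
  lowerType : ∃ p : ℝ, 0 < p ∧ p ≤ 1 ∧ UniformLowerType φ p
  upperType : UniformUpperType φ 1

/-- `∫_{ℝⁿ} φ(x,|f(x)|) dx`. -/
def phiIntegral {n : ℕ} (φ : Rn n → ℝ → ℝ) (f : Rn n → ℝ) : ℝ≥0∞ :=
  ∫⁻ x, ENNReal.ofReal (φ x |f x|)

/-- Membership in the Musielak–Orlicz space `L^φ(ℝⁿ)`. -/
def MemLphi {n : ℕ} (φ : Rn n → ℝ → ℝ) (f : Rn n → ℝ) : Prop :=
  AEMeasurable f ∧ phiIntegral φ f < ∞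

/-- The Luxembourg quasi-norm on `L^φ(ℝⁿ)`. -/
def LuxNorm {n : ℕ} (φ : Rn n → ℝ → ℝ) (f : Rn n → ℝ) : ℝ :=
  sInf {c : ℝ | 0 < c ∧ (∫⁻ x, ENNReal.ofReal (φ x (|f x| / c))) ≤ 1}

/-- Weighted `L^p` membership: `f ∈ L^p_w(ℝⁿ)`. -/
def MemLpw {n : ℕ} (w : Rn n → ℝ) (p : ℝ) (f : Rn n → ℝ) : Prop :=
  AEMeasurable f ∧ (∫⁻ x, ENNReal.ofReal (|f x| ^ p * w x)) < ∞

/-- The `ℓ^r` norm (in `ℝ≥0∞`) of a family of reals, `r ∈ [1,∞]`;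
sums are replaced by suprema when `r = ∞`. -/
def lrNormE (r : ℝ≥0∞) {ι : Type*} (a : ι → ℝ) : ℝ≥0∞ :=
  if r = ∞ then ⨆ j, (‖a j‖₊ : ℝ≥0∞)
  else (∑' j, (‖a j‖₊ : ℝ≥0∞) ^ r.toReal) ^ (1 / r.toReal)

/-- The Hardy–Littlewood maximal function (real-valued). -/
def hlMax {n : ℕ} (f : Rn n → ℝ) (x : Rn n) : ℝ :=
  sSup {a : ℝ | ∃ (z : Rn n) (ρ : ℝ), 0 < ρ ∧ x ∈ ball z ρ ∧
    a = ((∫⁻ y in ball z ρ, ENNReal.ofReal |f y|) / volume (ball z ρ)).toReal}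

/-- The Hardy–Littlewood maximal function (with values in `ℝ≥0∞`). -/
def hlMaxE {n : ℕ} (f : Rn n → ℝ) (x : Rn n) : ℝ≥0∞ :=
  ⨆ (z : Rn n) (ρ : ℝ) (_ : 0 < ρ) (_ : x ∈ ball z ρ),
    (∫⁻ y in ball z ρ, ENNReal.ofReal |f y|) / volume (ball z ρ)

/-- The operator `K_B g(x) = ∫ |g(y)| 2^{-B|x-y|} dy`. -/
def kernelKE {n : ℕ} (B : ℝ) (g : Rn n → ℝ) (x : Rn n) : ℝ≥0∞ :=
  ∫⁻ y, ENNReal.ofReal (|g y| * (2 : ℝ) ^ (-(B * ‖x - y‖)))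

/-- Tempered distributions on `ℝⁿ`. -/
abbrev TemperedDist (n : ℕ) := SchwartzMap (Rn n) ℝ →L[ℝ] ℝ

/-- The Schwartz map whose underlying function is `g` (junk value if there is none). -/
def toSchwartz {n : ℕ} (g : Rn n → ℝ) : SchwartzMap (Rn n) ℝ :=
  if h : ∃ ψ : SchwartzMap (Rn n) ℝ, ⇑ψ = g then h.choose else 0

/-- The pairing of a tempered distribution with a (Schwartz) function. -/
def distPair {n : ℕ} (f : TemperedDist n) (g : Rn n → ℝ) : ℝ := f (toSchwartz g)

/-- The convolution `f * g (y) = f(z ↦ g(y - z))` of a tempered distribution `f`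
with a (Schwartz) function `g`. -/
def convF {n : ℕ} (f : TemperedDist n) (g : Rn n → ℝ) (y : Rn n) : ℝ :=
  distPair f fun z => g (y - z)

/-- The dilation `g_t(x) = t^{-n} g(x/t)`. -/
def dilat {n : ℕ} (g : Rn n → ℝ) (t : ℝ) : Rn n → ℝ :=
  fun x => (t ^ n)⁻¹ * g (t⁻¹ • x)

/-- The dyadic dilation `g_j(x) = 2^{jn} g(2^j x)`, `j ∈ ℤ`. -/
def dyadic {n : ℕ} (g : Rn n → ℝ) (j : ℤ) : Rn n → ℝ :=
  fun x => (2 : ℝ) ^ (j * (n : ℤ)) * g ((2 : ℝ) ^ j • x)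

/-- The weight `m_{j,A,B}(y) = (1 + 2^j |y|)^A 2^{B|y|}`. -/
def mJAB {n : ℕ} (j : ℤ) (A B : ℝ) (y : Rn n) : ℝ :=
  (1 + (2 : ℝ) ^ j * ‖y‖) ^ A * (2 : ℝ) ^ (B * ‖y‖)

/-- The vertical maximal function `ψ₀⁺(f)`. -/
def vertMax {n : ℕ} (ψ₀ : Rn n → ℝ) (f : TemperedDist n) (x : Rn n) : ℝ :=
  ⨆ j : ℤ, |convF f (dyadic ψ₀ j) x|

/-- The tangential Peetre-type maximal function `ψ₀,A,B^{**}(f)`. -/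
def peetreMaxStar {n : ℕ} (ψ₀ : Rn n → ℝ) (A B : ℝ) (f : TemperedDist n) (x : Rn n) : ℝ :=
  ⨆ (j : ℤ) (y : Rn n), |convF f (dyadic ψ₀ j) (x - y)| / mJAB j A B y

/-- The single-scale Peetre-type maximal function `(ψ₀)*_{j,A,B}(f)` (in `ℝ≥0∞`). -/
def peetreJE {n : ℕ} (ψ₀ : Rn n → ℝ) (j : ℤ) (A B : ℝ) (f : TemperedDist n) (x : Rn n) : ℝ≥0∞ :=
  ⨆ y : Rn n, ENNReal.ofReal (|convF f (dyadic ψ₀ j) (x - y)| / mJAB j A B y)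

/-- The nontangential maximal function `(ψ₀)_∇^*(f)`. -/
def nontanMax {n : ℕ} (ψ₀ : Rn n → ℝ) (f : TemperedDist n) (x : Rn n) : ℝ :=
  ⨆ (y : Rn n) (t : ℝ) (_ : 0 < t) (_ : dist x y < t), |convF f (dilat ψ₀ t) y|

/-- Membership in the family `𝒮_m(ℝⁿ)`. -/
def inSm {n : ℕ} (m : ℕ) (ψ : SchwartzMap (Rn n) ℝ) : Prop :=
  ∀ (x : Rn n) (k : ℕ), k ≤ m + 1 → ∀ e : Fin k → Fin n,
    (1 + ‖x‖) ^ ((m + 2) * (n + 1)) *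
      |iteratedFDeriv ℝ k (⇑ψ) x fun i => EuclideanSpace.single (e i) (1 : ℝ)| ≤ 1

/-- The grand maximal function `f*_m`. -/
def grandMax {n : ℕ} (m : ℕ) (f : TemperedDist n) (x : Rn n) : ℝ :=
  ⨆ (ψ : {ψ : SchwartzMap (Rn n) ℝ // inSm m ψ}) (y : Rn n) (t : ℝ) (_ : 0 < t)
    (_ : dist y x < t), |convF f (dilat (⇑ψ.1) t) y|

/-- Membership in the Musielak–Orlicz Hardy space `H^φ(ℝⁿ)`. -/
def MemHphi {n : ℕ} (φ : Rn n → ℝ → ℝ) (f : TemperedDist n) : Prop :=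
  MemLphi φ (grandMax (mIndex φ) f)

/-- The quasi-norm on `H^φ(ℝⁿ)`. -/
def HphiNorm {n : ℕ} (φ : Rn n → ℝ → ℝ) (f : TemperedDist n) : ℝ :=
  LuxNorm φ (grandMax (mIndex φ) f)

/-- The Littlewood–Paley `g`-function. -/
def gFun {n : ℕ} (g : Rn n → ℝ) (f : TemperedDist n) (x : Rn n) : ℝ :=
  ((∫⁻ t in Set.Ioi (0 : ℝ),
      ENNReal.ofReal (|convF f (dilat g t) x| ^ 2 / t)).toReal) ^ (1 / 2 : ℝ)

/-- The Lusin area function `S(f)`. -/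
def sFun {n : ℕ} (g : Rn n → ℝ) (f : TemperedDist n) (x : Rn n) : ℝ :=
  ((∫⁻ t in Set.Ioi (0 : ℝ),
      (∫⁻ y in ball x t, ENNReal.ofReal (|convF f (dilat g t) y| ^ 2)) /
        ENNReal.ofReal (t ^ (n + 1))).toReal) ^ (1 / 2 : ℝ)

/-- The dilated Lusin area function `S_α(f)`. -/
def sAlphaFun {n : ℕ} (g : Rn n → ℝ) (α : ℝ) (f : TemperedDist n) (x : Rn n) : ℝ :=
  ((∫⁻ t in Set.Ioi (0 : ℝ),
      (∫⁻ y in ball x (α * t), ENNReal.ofReal (|convF f (dilat g t) y| ^ 2)) /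
        ENNReal.ofReal ((α * t) ^ n * t)).toReal) ^ (1 / 2 : ℝ)

/-- The Littlewood–Paley `g_λ^*`-function. -/
def gLamFun {n : ℕ} (g : Rn n → ℝ) (lam : ℝ) (f : TemperedDist n) (x : Rn n) : ℝ :=
  ((∫⁻ t in Set.Ioi (0 : ℝ),
      (∫⁻ y, ENNReal.ofReal
          ((t / (t + dist x y)) ^ (lam * (n : ℝ)) * |convF f (dilat g t) y| ^ 2)) /
        ENNReal.ofReal (t ^ (n + 1))).toReal) ^ (1 / 2 : ℝ)

/-- `g` is a radial function. -/
def RadialFn {n : ℕ} (g : Rn n → ℝ) : Prop := ∀ x y : Rn n, ‖x‖ = ‖y‖ → g x = g y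

/-- `g` has vanishing moments up to order `m`. -/
def VanishingMoments {n : ℕ} (g : Rn n → ℝ) (m : ℕ) : Prop :=
  ∀ γ : Fin n → ℕ, (∑ i, γ i) ≤ m → (∫ x : Rn n, g x * ∏ i, (x i) ^ γ i) = 0

/-- The Calderón reproducing normalization `∫_0^∞ |ĝ(tξ)|² dt/t = 1` for `ξ ≠ 0`. -/
def CalderonNormalized {n : ℕ} (g : Rn n → ℝ) : Prop :=
  ∀ ξ : Rn n, ξ ≠ 0 →
    (∫ t in Set.Ioi (0 : ℝ), ‖𝓕 (fun x : Rn n => (g x : ℂ)) (t • ξ)‖ ^ 2 / t) = 1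

/-- `f ∈ 𝒮'(ℝⁿ)` vanishes weakly at infinity. -/
def VanishWeakInfty {n : ℕ} (f : TemperedDist n) : Prop :=
  ∀ θ ψ : SchwartzMap (Rn n) ℝ,
    Filter.Tendsto (fun t : ℝ => ∫ x, convF f (dilat (⇑θ) t) x * ψ x)
      Filter.atTop (𝓝 0)

/-- `φ(·,t)` is uniformly locally integrable. -/
def UnifLocInt {n : ℕ} (φ : Rn n → ℝ → ℝ) : Prop :=
  ∀ K : Set (Rn n), IsCompact K →
    (∫⁻ x in K, ⨆ (t : ℝ) (_ : 0 < t),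
      ENNReal.ofReal (φ x t) / ∫⁻ y in K, ENNReal.ofReal (φ y t)) < ∞

/-- `φ̃(x,t) = ∫_0^t φ(x,s)/s ds`. -/
def phiTilde {n : ℕ} (φ : Rn n → ℝ → ℝ) (x : Rn n) (t : ℝ) : ℝ :=
  ∫ s in (0 : ℝ)..t, φ x s / s

private lemma geom_sum_lt' {e A : ℝ} (he : 0 < e) (hA : 0 < A) :
    (∑' k : ℤ, if (2:ℝ) ^ k < A then ENNReal.ofReal (((2:ℝ) ^ k) ^ e) else 0) ≤
      ENNReal.ofReal ((1 - 2 ^ (-e))⁻¹ * A ^ e) := by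
  classical
  set J : ℤ := Int.log 2 A with hJ
  have h2 : (1:ℝ) < 2 := one_lt_two
  have hJ1 : (2:ℝ) ^ J ≤ A := by
    have := Int.zpow_log_le_self (R := ℝ) (b := 2) (by norm_num) hA
    simpa using this
  have hJ2 : A < (2:ℝ) ^ (J + 1) := by
    have := Int.lt_zpow_succ_log_self (R := ℝ) (b := 2) (by norm_num) A
    simpa using this
  set F : ℤ → ℝ≥0∞ := fun k => if (2:ℝ) ^ k < A then ENNReal.ofReal (((2:ℝ) ^ k) ^ e) else 0
    with hF
  have hsupp : Function.support F ⊆ Set.range (fun i : ℕ => J - (i:ℤ)) := by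
    intro k hk
    have hk' : (2:ℝ) ^ k < A := by
      by_contra hc
      simp [hF, hc] at hk
    have hkJ : k ≤ J := by
      by_contra hc
      push_neg at hc
      have : (2:ℝ) ^ (J+1) ≤ (2:ℝ) ^ k := by
        apply zpow_le_zpow_right₀ h2.le (by omega)
      linarith
    refine ⟨(J - k).toNat, ?_⟩
    show J - ((J - k).toNat : ℤ) = k
    omega
  have hinj : Function.Injective (fun i : ℕ => J - (i:ℤ)) := by
    intro a b hab
    simp only [sub_right_inj, Int.natCast_inj] at hab
    exact_mod_cast hab
  rw [← hinj.tsum_eq hsupp]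
  have hterm : ∀ i : ℕ, F (J - (i:ℤ)) ≤
      ENNReal.ofReal (((2:ℝ) ^ J) ^ e) * ENNReal.ofReal ((2:ℝ) ^ (-e)) ^ i := by
    intro i
    have hv : (((2:ℝ) ^ (J - (i:ℤ))) ^ e) = ((2:ℝ) ^ J) ^ e * ((2:ℝ) ^ (-e)) ^ i := by
      have h2p : (0:ℝ) < 2 := two_pos
      rw [show ((2:ℝ) ^ (J - (i:ℤ))) = (2:ℝ) ^ (((J - (i:ℤ)) : ℤ) : ℝ) from
          (Real.rpow_intCast 2 _).symm,
        show ((2:ℝ) ^ J) = (2:ℝ) ^ ((J : ℤ) : ℝ) from (Real.rpow_intCast 2 _).symm,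
        ← Real.rpow_natCast ((2:ℝ) ^ (-e)) i,
        ← Real.rpow_mul h2p.le, ← Real.rpow_mul h2p.le, ← Real.rpow_mul h2p.le,
        ← Real.rpow_add h2p]
      congr 1
      push_cast
      ring
    calc F (J - (i:ℤ)) ≤ ENNReal.ofReal (((2:ℝ) ^ (J - (i:ℤ))) ^ e) := by
          by_cases hc : (2:ℝ) ^ (J - (i:ℤ)) < A <;> simp [hF, hc]
      _ = ENNReal.ofReal (((2:ℝ) ^ J) ^ e) * ENNReal.ofReal ((2:ℝ) ^ (-e)) ^ i := by
          rw [hv, ENNReal.ofReal_mul (by positivity), ENNReal.ofReal_pow (by positivity)]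
  calc (∑' i : ℕ, F (J - (i:ℤ)))
      ≤ ∑' i : ℕ, ENNReal.ofReal (((2:ℝ) ^ J) ^ e) * ENNReal.ofReal ((2:ℝ) ^ (-e)) ^ i :=
        ENNReal.tsum_le_tsum hterm
    _ = ENNReal.ofReal (((2:ℝ) ^ J) ^ e) * (1 - ENNReal.ofReal ((2:ℝ) ^ (-e)))⁻¹ := by
        rw [ENNReal.tsum_mul_left, ENNReal.tsum_geometric]
    _ ≤ ENNReal.ofReal (A ^ e) * ENNReal.ofReal ((1 - (2:ℝ) ^ (-e))⁻¹) := by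
        have h1 : (2:ℝ) ^ (-e) < 1 :=
          Real.rpow_lt_one_of_one_lt_of_neg h2 (by linarith)
        have h2' : (1 - ENNReal.ofReal ((2:ℝ) ^ (-e)))⁻¹ =
            ENNReal.ofReal ((1 - (2:ℝ) ^ (-e))⁻¹) := by
          rw [ENNReal.ofReal_inv_of_pos (by linarith), ENNReal.ofReal_sub _ (by positivity),
            ENNReal.ofReal_one]
        rw [h2']
        exact mul_le_mul' (ENNReal.ofReal_le_ofReal
          (Real.rpow_le_rpow (by positivity) hJ1 he.le)) le_rfl
    _ = ENNReal.ofReal ((1 - 2 ^ (-e))⁻¹ * A ^ e) := by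
        rw [← ENNReal.ofReal_mul (by positivity), mul_comm]

private lemma geom_sum_ge' {e A : ℝ} (he : e < 0) (hA : 0 < A) :
    (∑' k : ℤ, if A ≤ (2:ℝ) ^ k then ENNReal.ofReal (((2:ℝ) ^ k) ^ e) else 0) ≤
      ENNReal.ofReal ((1 - 2 ^ e)⁻¹ * A ^ e) := by
  classical
  set m : ℤ := Int.clog 2 A with hm
  have h2 : (1:ℝ) < 2 := one_lt_two
  have hm1 : A ≤ (2:ℝ) ^ m := by
    have := Int.self_le_zpow_clog (R := ℝ) (b := 2) (by norm_num) A
    simpa using this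
  have hm2 : (2:ℝ) ^ (m - 1) < A := by
    have := Int.zpow_pred_clog_lt_self (R := ℝ) (b := 2) (by norm_num) hA
    simpa using this
  set F : ℤ → ℝ≥0∞ := fun k => if A ≤ (2:ℝ) ^ k then ENNReal.ofReal (((2:ℝ) ^ k) ^ e) else 0
    with hF
  have hsupp : Function.support F ⊆ Set.range (fun i : ℕ => m + (i:ℤ)) := by
    intro k hk
    have hk' : A ≤ (2:ℝ) ^ k := by
      by_contra hc
      simp [hF, hc] at hk
    have hkm : m ≤ k := by
      by_contra hc
      push_neg at hc
      have : (2:ℝ) ^ k ≤ (2:ℝ) ^ (m - 1) := zpow_le_zpow_right₀ h2.le (by omega)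
      linarith
    refine ⟨(k - m).toNat, ?_⟩
    show m + ((k - m).toNat : ℤ) = k
    omega
  have hinj : Function.Injective (fun i : ℕ => m + (i:ℤ)) := by
    intro a b hab
    simpa using hab
  rw [← hinj.tsum_eq hsupp]
  have hterm : ∀ i : ℕ, F (m + (i:ℤ)) ≤
      ENNReal.ofReal (((2:ℝ) ^ m) ^ e) * ENNReal.ofReal ((2:ℝ) ^ e) ^ i := by
    intro i
    have hv : (((2:ℝ) ^ (m + (i:ℤ))) ^ e) = ((2:ℝ) ^ m) ^ e * ((2:ℝ) ^ e) ^ i := by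
      have h2p : (0:ℝ) < 2 := two_pos
      rw [show ((2:ℝ) ^ (m + (i:ℤ))) = (2:ℝ) ^ (((m + (i:ℤ)) : ℤ) : ℝ) from
          (Real.rpow_intCast 2 _).symm,
        show ((2:ℝ) ^ m) = (2:ℝ) ^ ((m : ℤ) : ℝ) from (Real.rpow_intCast 2 _).symm,
        ← Real.rpow_natCast ((2:ℝ) ^ e) i,
        ← Real.rpow_mul h2p.le, ← Real.rpow_mul h2p.le, ← Real.rpow_mul h2p.le,
        ← Real.rpow_add h2p]
      congr 1
      push_cast
      ring
    calc F (m + (i:ℤ)) ≤ ENNReal.ofReal (((2:ℝ) ^ (m + (i:ℤ))) ^ e) := by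
          by_cases hc : A ≤ (2:ℝ) ^ (m + (i:ℤ)) <;> simp [hF, hc]
      _ = ENNReal.ofReal (((2:ℝ) ^ m) ^ e) * ENNReal.ofReal ((2:ℝ) ^ e) ^ i := by
          rw [hv, ENNReal.ofReal_mul (by positivity), ENNReal.ofReal_pow (by positivity)]
  calc (∑' i : ℕ, F (m + (i:ℤ)))
      ≤ ∑' i : ℕ, ENNReal.ofReal (((2:ℝ) ^ m) ^ e) * ENNReal.ofReal ((2:ℝ) ^ e) ^ i :=
        ENNReal.tsum_le_tsum hterm
    _ = ENNReal.ofReal (((2:ℝ) ^ m) ^ e) * (1 - ENNReal.ofReal ((2:ℝ) ^ e))⁻¹ := by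
        rw [ENNReal.tsum_mul_left, ENNReal.tsum_geometric]
    _ ≤ ENNReal.ofReal (A ^ e) * ENNReal.ofReal ((1 - (2:ℝ) ^ e)⁻¹) := by
        have h1 : (2:ℝ) ^ e < 1 := Real.rpow_lt_one_of_one_lt_of_neg h2 he
        have h2' : (1 - ENNReal.ofReal ((2:ℝ) ^ e))⁻¹ =
            ENNReal.ofReal ((1 - (2:ℝ) ^ e)⁻¹) := by
          rw [ENNReal.ofReal_inv_of_pos (by linarith), ENNReal.ofReal_sub _ (by positivity),
            ENNReal.ofReal_one]
        rw [h2']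
        exact mul_le_mul' (ENNReal.ofReal_le_ofReal
          (Real.rpow_le_rpow_of_nonpos hA hm1 he.le)) le_rfl
    _ = ENNReal.ofReal ((1 - 2 ^ e)⁻¹ * A ^ e) := by
        rw [← ENNReal.ofReal_mul (by positivity), mul_comm]

set_option maxHeartbeats 1000000 in
private theorem modular_bound {n : ℕ} (φ : Rn n → ℝ → ℝ) {p₁ p₂ pm pp CL CU C₁ C₂ : ℝ}
    (hp₁ : 0 < p₁) (hp₁m : p₁ < pm) (hmp : pm ≤ pp) (hpp₂ : pp < p₂)
    (horlicz : ∀ x, IsOrliczFn (φ x)) (hmeas : ∀ t : ℝ, Measurable fun x => φ x t)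
    (hCL : 0 < CL) (hCU : 0 < CU)
    (hlow : ∀ (x : Rn n) (t s : ℝ), 0 ≤ t → 0 ≤ s → s ≤ 1 → φ x (s * t) ≤ CL * s ^ pm * φ x t)
    (hupp : ∀ (x : Rn n) (t s : ℝ), 0 ≤ t → 1 ≤ s → φ x (s * t) ≤ CU * s ^ pp * φ x t)
    (hC₁ : 0 < C₁) (hC₂ : 0 < C₂)
    (T : (Rn n → ℝ) → Rn n → ℝ)
    (hsub : ∀ f g : Rn n → ℝ, ∀ᵐ x : Rn n, |T (f + g) x| ≤ |T f x| + |T g x|)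
    (hweak₁ : ∀ f : Rn n → ℝ, ∀ t : ℝ, 0 < t → MemLpw (fun x => φ x t) p₁ f →
      ∀ α : ℝ, 0 < α →
        (∫⁻ x in {x : Rn n | α < |T f x|}, ENNReal.ofReal (φ x t)) ≤
          ENNReal.ofReal (C₁ * α ^ (-p₁)) * ∫⁻ x, ENNReal.ofReal (|f x| ^ p₁ * φ x t))
    (hweak₂ : ∀ f : Rn n → ℝ, ∀ t : ℝ, 0 < t → MemLpw (fun x => φ x t) p₂ f →
      ∀ α : ℝ, 0 < α →
        (∫⁻ x in {x : Rn n | α < |T f x|}, ENNReal.ofReal (φ x t)) ≤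
          ENNReal.ofReal (C₂ * α ^ (-p₂)) * ∫⁻ x, ENNReal.ofReal (|f x| ^ p₂ * φ x t))
    (f : Rn n → ℝ) (hf : MemLphi φ f) :
    phiIntegral φ (T f) ≤
      ENNReal.ofReal (C₁ * CL * CU * 16 ^ pp * (1 - 2 ^ (p₁ - pm))⁻¹ +
          C₂ * CU * 16 ^ pp * (1 - 2 ^ (pp - p₂))⁻¹) *
        phiIntegral φ f := by
  classical
  have hpm : 0 < pm := hp₁.trans hp₁m
  have hpp : 0 < pp := hpm.trans_le hmp
  have hp₂ : 0 < p₂ := hpp.trans hpp₂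
  have h2p : (0:ℝ) < 2 := two_pos
  have hgeo1 : (2:ℝ) ^ (p₁ - pm) < 1 :=
    Real.rpow_lt_one_of_one_lt_of_neg one_lt_two (by linarith)
  have hgeo2 : (2:ℝ) ^ (pp - p₂) < 1 :=
    Real.rpow_lt_one_of_one_lt_of_neg one_lt_two (by linarith)
  have hphi_nn : ∀ (x : Rn n) (t : ℝ), 0 ≤ t → 0 ≤ φ x t := by
    intro x t ht
    have := (horlicz x).mono le_rfl ht
    rwa [(horlicz x).map_zero] at this
  have hIf : phiIntegral φ f < ∞ := hf.2
  have hIbound : ∀ K : ℝ, 0 ≤ K →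
      (∫⁻ x, ENNReal.ofReal (K * φ x |f x|)) ≤ ENNReal.ofReal K * phiIntegral φ f := by
    intro K hK
    apply le_of_eq
    calc (∫⁻ x, ENNReal.ofReal (K * φ x |f x|))
        = ∫⁻ x, ENNReal.ofReal K * ENNReal.ofReal (φ x |f x|) := by
          simp_rw [ENNReal.ofReal_mul hK]
      _ = ENNReal.ofReal K * phiIntegral φ f :=
          lintegral_const_mul' _ _ ENNReal.ofReal_ne_top
  -- Step A : measurable minorant of the integrand
  obtain ⟨G, hGmeas, hGle, hGint⟩ :=
    exists_measurable_le_lintegral_eq (volume : Measure (Rn n))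
      (fun x => ENNReal.ofReal (φ x |T f x|))
  have hGfin : ∀ x, G x ≠ ∞ := fun x => ((hGle x).trans_lt ENNReal.ofReal_lt_top).ne
  -- Step B : the pseudo-inverse u
  set S : Rn n → Set ℝ := fun x => {t : ℝ | 0 ≤ t ∧ G x ≤ ENNReal.ofReal (φ x t)} with hS
  have hSne : ∀ x, (S x).Nonempty := fun x => ⟨|T f x|, abs_nonneg _, hGle x⟩
  have hSbdd : ∀ x, BddBelow (S x) := fun x => ⟨0, fun t ht => ht.1⟩
  set u : Rn n → ℝ := fun x => sInf (S x) with hu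
  have hu0 : ∀ x, 0 ≤ u x := fun x => le_csInf (hSne x) fun t ht => ht.1
  have huT : ∀ x, u x ≤ |T f x| := fun x => csInf_le (hSbdd x) ⟨abs_nonneg _, hGle x⟩
  have hGu : ∀ x, G x ≤ ENNReal.ofReal (φ x (2 * u x)) := by
    intro x
    rcases (hu0 x).eq_or_lt with h0 | hpos
    · have hG0 : G x = 0 := by
        by_contra hne
        set δ := (G x).toReal with hδ
        have hδpos : 0 < δ := ENNReal.toReal_pos hne (hGfin x)
        set P : ℝ := φ x 1 with hP
        have hPnn : 0 ≤ P := hphi_nn x 1 zero_le_one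
        set s : ℝ := min 1 ((δ / (2 * CL * (P + 1))) ^ (1 / pm)) with hsd
        have hspos : 0 < s := by
          apply lt_min one_pos
          apply Real.rpow_pos_of_pos
          positivity
        have hsle1 : s ≤ 1 := min_le_left _ _
        have hspm : s ^ pm ≤ δ / (2 * CL * (P + 1)) := by
          calc s ^ pm ≤ ((δ / (2 * CL * (P + 1))) ^ (1 / pm)) ^ pm :=
                Real.rpow_le_rpow hspos.le (min_le_right _ _) hpm.le
            _ = δ / (2 * CL * (P + 1)) := by
                rw [← Real.rpow_mul (by positivity), one_div,
                  inv_mul_cancel₀ hpm.ne', Real.rpow_one]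
        obtain ⟨t, htS, hts⟩ := exists_lt_of_csInf_lt (hSne x)
          (show u x < s by rw [← h0]; exact hspos)
        have hφt : φ x t ≤ CL * s ^ pm * P := by
          calc φ x t ≤ φ x (s * 1) := (horlicz x).mono htS.1 (by rw [mul_one]; exact hts.le)
            _ ≤ CL * s ^ pm * φ x 1 := hlow x 1 s zero_le_one hspos.le hsle1
        have hφtδ : φ x t < δ := by
          have h1 : CL * s ^ pm * P ≤ CL * (δ / (2 * CL * (P + 1))) * P :=
            mul_le_mul_of_nonneg_right (mul_le_mul_of_nonneg_left hspm hCL.le) hPnn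
          have h2 : CL * (δ / (2 * CL * (P + 1))) * P < δ := by
            have hpos' : (0:ℝ) < 2 * CL * (P + 1) := by positivity
            rw [mul_comm CL, div_mul_eq_mul_div, div_mul_eq_mul_div, div_lt_iff₀ hpos']
            nlinarith
          linarith
        have hcon : G x < G x := by
          calc G x ≤ ENNReal.ofReal (φ x t) := htS.2
            _ < ENNReal.ofReal δ := by
                rw [ENNReal.ofReal_lt_ofReal_iff hδpos]; exact hφtδ
            _ = G x := ENNReal.ofReal_toReal (hGfin x)
        exact absurd hcon (lt_irrefl _)
      rw [hG0]; exact zero_le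
    · have h2u : u x < 2 * u x := by linarith
      obtain ⟨t, htS, hts⟩ := exists_lt_of_csInf_lt (hSne x) h2u
      exact htS.2.trans (ENNReal.ofReal_le_ofReal ((horlicz x).mono htS.1 hts.le))
  have humeas : Measurable u := by
    apply measurable_of_Iio
    intro b
    have hset : u ⁻¹' Set.Iio b =
        ⋃ (q : ℚ) (_ : 0 ≤ (q:ℝ)) (_ : (q:ℝ) < b), {x | G x ≤ ENNReal.ofReal (φ x q)} := by
      ext x
      simp only [Set.mem_preimage, Set.mem_Iio, Set.mem_iUnion, Set.mem_setOf_eq]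
      constructor
      · intro hx
        obtain ⟨t, htS, htb⟩ := exists_lt_of_csInf_lt (hSne x) hx
        obtain ⟨q, hq1, hq2⟩ := exists_rat_btwn htb
        exact ⟨q, htS.1.trans hq1.le, hq2,
          htS.2.trans (ENNReal.ofReal_le_ofReal ((horlicz x).mono htS.1 hq1.le))⟩
      · rintro ⟨q, hq0, hqb, hq⟩
        exact lt_of_le_of_lt (csInf_le (hSbdd x) ⟨hq0, hq⟩) hqb
    rw [hset]
    refine MeasurableSet.iUnion fun q => MeasurableSet.iUnion fun _ =>
      MeasurableSet.iUnion fun _ => ?_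
    exact measurableSet_le hGmeas (ENNReal.measurable_ofReal.comp (hmeas (q:ℝ)))
  -- Step C : dyadic decomposition of the level function v = 2u
  have hvmeas : Measurable (fun x => 2 * u x) := measurable_const.mul humeas
  have hv0 : ∀ x, 0 ≤ 2 * u x := fun x => by have := hu0 x; linarith
  set E : ℤ → Set (Rn n) :=
    fun k => {x | (2:ℝ) ^ k < 2 * u x ∧ 2 * u x ≤ (2:ℝ) ^ (k + 1)} with hE
  have hEmeas : ∀ k, MeasurableSet (E k) := fun k =>
    (measurableSet_lt measurable_const hvmeas).inter
      (measurableSet_le hvmeas measurable_const)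
  set A : ℤ → Rn n → ℝ≥0∞ :=
    fun k => (E k).indicator (fun x => ENNReal.ofReal (φ x ((2:ℝ) ^ (k + 1)))) with hA
  have hAmeas : ∀ k, Measurable (A k) := fun k =>
    (ENNReal.measurable_ofReal.comp (hmeas _)).indicator (hEmeas k)
  have hpt : ∀ x, ENNReal.ofReal (φ x (2 * u x)) ≤ ∑' k : ℤ, A k x := by
    intro x
    rcases (hv0 x).eq_or_lt with h0 | hpos
    · rw [← h0, (horlicz x).map_zero]; simp
    · set K : ℤ := Int.log 2 (2 * u x) with hK
      have hK1 : (2:ℝ) ^ K ≤ 2 * u x := by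
        have := Int.zpow_log_le_self (R := ℝ) (b := 2) (by norm_num) hpos
        simpa using this
      have hK2 : 2 * u x < (2:ℝ) ^ (K + 1) := by
        have := Int.lt_zpow_succ_log_self (R := ℝ) (b := 2) (by norm_num) (2 * u x)
        simpa using this
      rcases hK1.eq_or_lt with heq | hlt
      · have hxE : x ∈ E (K - 1) := by
          constructor
          · rw [← heq]
            exact zpow_lt_zpow_right₀ one_lt_two (by omega)
          · rw [sub_add_cancel]; exact heq.ge
        calc ENNReal.ofReal (φ x (2 * u x)) = A (K - 1) x := by
              simp only [hA]
              rw [Set.indicator_of_mem hxE, sub_add_cancel, ← heq]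
          _ ≤ ∑' k : ℤ, A k x := ENNReal.le_tsum _
      · have hxE : x ∈ E K := ⟨hlt, hK2.le⟩
        calc ENNReal.ofReal (φ x (2 * u x)) ≤ A K x := by
              simp only [hA]
              rw [Set.indicator_of_mem hxE]
              exact ENNReal.ofReal_le_ofReal ((horlicz x).mono (hv0 x) hK2.le)
          _ ≤ ∑' k : ℤ, A k x := ENNReal.le_tsum _
  -- the cut-offs
  set f1 : ℤ → Rn n → ℝ := fun k x => if (2:ℝ) ^ (k - 2) < |f x| then f x else 0 with hf1
  set f2 : ℤ → Rn n → ℝ := fun k x => if (2:ℝ) ^ (k - 2) < |f x| then 0 else f x with hf2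
  have hf1m : ∀ k, AEMeasurable (f1 k) := by
    intro k
    have hcut : Measurable fun y : ℝ => if (2:ℝ) ^ (k - 2) < |y| then y else 0 :=
      Measurable.ite (measurableSet_lt measurable_const measurable_abs)
        measurable_id measurable_const
    exact hcut.comp_aemeasurable hf.1
  have hf2m : ∀ k, AEMeasurable (f2 k) := by
    intro k
    have hcut : Measurable fun y : ℝ => if (2:ℝ) ^ (k - 2) < |y| then 0 else y :=
      Measurable.ite (measurableSet_lt measurable_const measurable_abs)
        measurable_const measurable_id
    exact hcut.comp_aemeasurable hf.1
  have hβpos : ∀ k : ℤ, (0:ℝ) < (2:ℝ) ^ (k - 2) := fun k => zpow_pos h2p _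
  have hτpos : ∀ k : ℤ, (0:ℝ) < (2:ℝ) ^ (k + 1) := fun k => zpow_pos h2p _
  have hτβ : ∀ k : ℤ, (2:ℝ) ^ (k + 1) = 8 * (2:ℝ) ^ (k - 2) := by
    intro k
    rw [show k + 1 = (k - 2) + 3 by ring, zpow_add₀ (by norm_num : (2:ℝ) ≠ 0)]
    norm_num [mul_comm]
  -- pointwise estimates
  have hP1 : ∀ (k : ℤ) (x : Rn n), (2:ℝ) ^ (k - 2) < |f x| →
      φ x ((2:ℝ) ^ (k + 1)) ≤
        CL * CU * 16 ^ pp * ((2:ℝ) ^ (k - 2)) ^ pm * |f x| ^ (-pm) * φ x |f x| := by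
    intro k x hx
    have hβ : (0:ℝ) < (2:ℝ) ^ (k - 2) := hβpos k
    have ha : 0 < |f x| := hβ.trans hx
    have h16 : (0:ℝ) < 16 * |f x| := by positivity
    have hsle : (2:ℝ) ^ (k + 1) / (16 * |f x|) ≤ 1 := by
      rw [div_le_one h16, hτβ k]
      nlinarith
    have h1 : φ x ((2:ℝ) ^ (k + 1)) ≤
        CL * ((2:ℝ) ^ (k + 1) / (16 * |f x|)) ^ pm * φ x (16 * |f x|) := by
      have hrw : (2:ℝ) ^ (k + 1) = ((2:ℝ) ^ (k + 1) / (16 * |f x|)) * (16 * |f x|) := by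
        field_simp
      calc φ x ((2:ℝ) ^ (k + 1))
          = φ x (((2:ℝ) ^ (k + 1) / (16 * |f x|)) * (16 * |f x|)) := by rw [← hrw]
        _ ≤ CL * ((2:ℝ) ^ (k + 1) / (16 * |f x|)) ^ pm * φ x (16 * |f x|) :=
            hlow x _ _ h16.le (by positivity) hsle
    have h2 : φ x (16 * |f x|) ≤ CU * 16 ^ pp * φ x |f x| :=
      hupp x _ 16 (abs_nonneg _) (by norm_num)
    have h3 : ((2:ℝ) ^ (k + 1) / (16 * |f x|)) ^ pm ≤
        ((2:ℝ) ^ (k - 2)) ^ pm * |f x| ^ (-pm) := by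
      have hle : (2:ℝ) ^ (k + 1) / (16 * |f x|) ≤ (2:ℝ) ^ (k - 2) / |f x| := by
        rw [hτβ k, div_le_div_iff₀ h16 ha]
        nlinarith
      calc ((2:ℝ) ^ (k + 1) / (16 * |f x|)) ^ pm ≤ ((2:ℝ) ^ (k - 2) / |f x|) ^ pm :=
            Real.rpow_le_rpow (by positivity) hle hpm.le
        _ = ((2:ℝ) ^ (k - 2)) ^ pm * |f x| ^ (-pm) := by
            rw [Real.div_rpow hβ.le (abs_nonneg _), Real.rpow_neg (abs_nonneg _),
              div_eq_mul_inv]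
    calc φ x ((2:ℝ) ^ (k + 1))
        ≤ CL * ((2:ℝ) ^ (k + 1) / (16 * |f x|)) ^ pm * φ x (16 * |f x|) := h1
      _ ≤ (CL * (((2:ℝ) ^ (k - 2)) ^ pm * |f x| ^ (-pm))) * (CU * 16 ^ pp * φ x |f x|) := by
          apply mul_le_mul _ h2 (hphi_nn x _ h16.le) (by positivity)
          exact mul_le_mul_of_nonneg_left h3 hCL.le
      _ = CL * CU * 16 ^ pp * ((2:ℝ) ^ (k - 2)) ^ pm * |f x| ^ (-pm) * φ x |f x| := by ring
  have hP2 : ∀ (k : ℤ) (x : Rn n), 0 < |f x| → |f x| ≤ (2:ℝ) ^ (k - 2) →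
      φ x ((2:ℝ) ^ (k + 1)) ≤
        CU * 16 ^ pp * ((2:ℝ) ^ (k - 2)) ^ pp * |f x| ^ (-pp) * φ x |f x| := by
    intro k x ha hx
    have hβ : (0:ℝ) < (2:ℝ) ^ (k - 2) := hβpos k
    have hs1 : (1:ℝ) ≤ (2:ℝ) ^ (k + 1) / |f x| := by
      rw [le_div_iff₀ ha, hτβ k, one_mul]
      nlinarith
    have h1 : φ x ((2:ℝ) ^ (k + 1)) ≤ CU * ((2:ℝ) ^ (k + 1) / |f x|) ^ pp * φ x |f x| := by
      have hrw : (2:ℝ) ^ (k + 1) = ((2:ℝ) ^ (k + 1) / |f x|) * |f x| := by field_simp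
      calc φ x ((2:ℝ) ^ (k + 1)) = φ x (((2:ℝ) ^ (k + 1) / |f x|) * |f x|) := by rw [← hrw]
        _ ≤ CU * ((2:ℝ) ^ (k + 1) / |f x|) ^ pp * φ x |f x| :=
            hupp x _ _ (abs_nonneg _) hs1
    have h3 : ((2:ℝ) ^ (k + 1) / |f x|) ^ pp ≤
        16 ^ pp * (((2:ℝ) ^ (k - 2)) ^ pp * |f x| ^ (-pp)) := by
      have hle : (2:ℝ) ^ (k + 1) / |f x| ≤ 16 * (2:ℝ) ^ (k - 2) / |f x| :=
        (div_le_div_iff_of_pos_right ha).mpr (by rw [hτβ k]; nlinarith [hβpos k])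
      calc ((2:ℝ) ^ (k + 1) / |f x|) ^ pp ≤ (16 * (2:ℝ) ^ (k - 2) / |f x|) ^ pp :=
            Real.rpow_le_rpow (by positivity) hle hpp.le
        _ = 16 ^ pp * (((2:ℝ) ^ (k - 2)) ^ pp * |f x| ^ (-pp)) := by
            rw [Real.div_rpow (by positivity) (abs_nonneg _),
              Real.mul_rpow (by norm_num) hβ.le, Real.rpow_neg (abs_nonneg _),
              div_eq_mul_inv, mul_assoc]
    calc φ x ((2:ℝ) ^ (k + 1)) ≤ CU * ((2:ℝ) ^ (k + 1) / |f x|) ^ pp * φ x |f x| := h1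
      _ ≤ (CU * (16 ^ pp * (((2:ℝ) ^ (k - 2)) ^ pp * |f x| ^ (-pp)))) * φ x |f x| := by
          apply mul_le_mul_of_nonneg_right _ (hphi_nn x _ (abs_nonneg _))
          exact mul_le_mul_of_nonneg_left h3 hCU.le
      _ = CU * 16 ^ pp * ((2:ℝ) ^ (k - 2)) ^ pp * |f x| ^ (-pp) * φ x |f x| := by ring
  -- weighted Lᵖ memberships
  have hmem1 : ∀ k : ℤ, MemLpw (fun x => φ x ((2:ℝ) ^ (k + 1))) p₁ (f1 k) := by
    intro k
    refine ⟨hf1m k, ?_⟩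
    have hbd : ∀ x, ENNReal.ofReal (|f1 k x| ^ p₁ * φ x ((2:ℝ) ^ (k + 1))) ≤
        ENNReal.ofReal ((CL * CU * 16 ^ pp * ((2:ℝ) ^ (k - 2)) ^ pm *
          ((2:ℝ) ^ (k - 2)) ^ (p₁ - pm)) * φ x |f x|) := by
      intro x
      apply ENNReal.ofReal_le_ofReal
      by_cases hc : (2:ℝ) ^ (k - 2) < |f x|
      · simp only [hf1, if_pos hc]
        have ha : 0 < |f x| := (hβpos k).trans hc
        have hprod : |f x| ^ p₁ * |f x| ^ (-pm) = |f x| ^ (p₁ - pm) := by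
          rw [← Real.rpow_add ha]; ring_nf
        have h5 : |f x| ^ (p₁ - pm) ≤ ((2:ℝ) ^ (k - 2)) ^ (p₁ - pm) :=
          Real.rpow_le_rpow_of_nonpos (hβpos k) hc.le (by linarith)
        calc |f x| ^ p₁ * φ x ((2:ℝ) ^ (k + 1))
            ≤ |f x| ^ p₁ * (CL * CU * 16 ^ pp * ((2:ℝ) ^ (k - 2)) ^ pm *
                |f x| ^ (-pm) * φ x |f x|) :=
              mul_le_mul_of_nonneg_left (hP1 k x hc) (Real.rpow_nonneg (abs_nonneg _) _)
          _ = (CL * CU * 16 ^ pp * ((2:ℝ) ^ (k - 2)) ^ pm) *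
                ((|f x| ^ p₁ * |f x| ^ (-pm)) * φ x |f x|) := by ring
          _ = (CL * CU * 16 ^ pp * ((2:ℝ) ^ (k - 2)) ^ pm) *
                (|f x| ^ (p₁ - pm) * φ x |f x|) := by rw [hprod]
          _ ≤ (CL * CU * 16 ^ pp * ((2:ℝ) ^ (k - 2)) ^ pm) *
                (((2:ℝ) ^ (k - 2)) ^ (p₁ - pm) * φ x |f x|) := by
              apply mul_le_mul_of_nonneg_left _ (by positivity)
              exact mul_le_mul_of_nonneg_right h5 (hphi_nn x _ (abs_nonneg _))
          _ = (CL * CU * 16 ^ pp * ((2:ℝ) ^ (k - 2)) ^ pm *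
                ((2:ℝ) ^ (k - 2)) ^ (p₁ - pm)) * φ x |f x| := by ring
      · simp only [hf1, if_neg hc]
        rw [abs_zero, Real.zero_rpow hp₁.ne', zero_mul]
        exact mul_nonneg (by positivity) (hphi_nn x _ (abs_nonneg _))
    calc (∫⁻ x, ENNReal.ofReal (|f1 k x| ^ p₁ * φ x ((2:ℝ) ^ (k + 1))))
        ≤ ∫⁻ x, ENNReal.ofReal ((CL * CU * 16 ^ pp * ((2:ℝ) ^ (k - 2)) ^ pm *
            ((2:ℝ) ^ (k - 2)) ^ (p₁ - pm)) * φ x |f x|) := lintegral_mono hbd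
      _ ≤ ENNReal.ofReal _ * phiIntegral φ f := hIbound _ (by positivity)
      _ < ∞ := ENNReal.mul_lt_top ENNReal.ofReal_lt_top hIf
  have hmem2 : ∀ k : ℤ, MemLpw (fun x => φ x ((2:ℝ) ^ (k + 1))) p₂ (f2 k) := by
    intro k
    refine ⟨hf2m k, ?_⟩
    have hbd : ∀ x, ENNReal.ofReal (|f2 k x| ^ p₂ * φ x ((2:ℝ) ^ (k + 1))) ≤
        ENNReal.ofReal ((CU * 16 ^ pp * ((2:ℝ) ^ (k - 2)) ^ pp *
          ((2:ℝ) ^ (k - 2)) ^ (p₂ - pp)) * φ x |f x|) := by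
      intro x
      apply ENNReal.ofReal_le_ofReal
      by_cases hc : (2:ℝ) ^ (k - 2) < |f x|
      · simp only [hf2, if_pos hc]
        rw [abs_zero, Real.zero_rpow hp₂.ne', zero_mul]
        exact mul_nonneg (by positivity) (hphi_nn x _ (abs_nonneg _))
      · simp only [hf2, if_neg hc]
        push_neg at hc
        rcases (abs_nonneg (f x)).eq_or_lt with ha0 | ha
        · rw [← ha0, Real.zero_rpow hp₂.ne', zero_mul, (horlicz x).map_zero, mul_zero]
        · have hprod : |f x| ^ p₂ * |f x| ^ (-pp) = |f x| ^ (p₂ - pp) := by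
            rw [← Real.rpow_add ha]; ring_nf
          have h5 : |f x| ^ (p₂ - pp) ≤ ((2:ℝ) ^ (k - 2)) ^ (p₂ - pp) :=
            Real.rpow_le_rpow (abs_nonneg _) hc (by linarith)
          calc |f x| ^ p₂ * φ x ((2:ℝ) ^ (k + 1))
              ≤ |f x| ^ p₂ * (CU * 16 ^ pp * ((2:ℝ) ^ (k - 2)) ^ pp *
                  |f x| ^ (-pp) * φ x |f x|) :=
                mul_le_mul_of_nonneg_left (hP2 k x ha hc) (Real.rpow_nonneg (abs_nonneg _) _)
            _ = (CU * 16 ^ pp * ((2:ℝ) ^ (k - 2)) ^ pp) *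
                  ((|f x| ^ p₂ * |f x| ^ (-pp)) * φ x |f x|) := by ring
            _ = (CU * 16 ^ pp * ((2:ℝ) ^ (k - 2)) ^ pp) *
                  (|f x| ^ (p₂ - pp) * φ x |f x|) := by rw [hprod]
            _ ≤ (CU * 16 ^ pp * ((2:ℝ) ^ (k - 2)) ^ pp) *
                  (((2:ℝ) ^ (k - 2)) ^ (p₂ - pp) * φ x |f x|) := by
                apply mul_le_mul_of_nonneg_left _ (by positivity)
                exact mul_le_mul_of_nonneg_right h5 (hphi_nn x _ (abs_nonneg _))
            _ = (CU * 16 ^ pp * ((2:ℝ) ^ (k - 2)) ^ pp *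
                  ((2:ℝ) ^ (k - 2)) ^ (p₂ - pp)) * φ x |f x| := by ring
    calc (∫⁻ x, ENNReal.ofReal (|f2 k x| ^ p₂ * φ x ((2:ℝ) ^ (k + 1))))
        ≤ ∫⁻ x, ENNReal.ofReal ((CU * 16 ^ pp * ((2:ℝ) ^ (k - 2)) ^ pp *
            ((2:ℝ) ^ (k - 2)) ^ (p₂ - pp)) * φ x |f x|) := lintegral_mono hbd
      _ ≤ ENNReal.ofReal _ * phiIntegral φ f := hIbound _ (by positivity)
      _ < ∞ := ENNReal.mul_lt_top ENNReal.ofReal_lt_top hIf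
  -- the summands
  set u1 : ℤ → Rn n → ℝ≥0∞ := fun k x =>
    ENNReal.ofReal (C₁ * ((2:ℝ) ^ (k - 2)) ^ (-p₁) *
      (|f1 k x| ^ p₁ * φ x ((2:ℝ) ^ (k + 1)))) with hu1d
  set u2 : ℤ → Rn n → ℝ≥0∞ := fun k x =>
    ENNReal.ofReal (C₂ * ((2:ℝ) ^ (k - 2)) ^ (-p₂) *
      (|f2 k x| ^ p₂ * φ x ((2:ℝ) ^ (k + 1)))) with hu2d
  have habs1 : Measurable fun y : ℝ => |y| ^ p₁ := measurable_abs.pow measurable_const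
  have habs2 : Measurable fun y : ℝ => |y| ^ p₂ := measurable_abs.pow measurable_const
  have hu1m : ∀ k, AEMeasurable (u1 k) := by
    intro k
    apply ENNReal.measurable_ofReal.comp_aemeasurable
    exact aemeasurable_const.mul
      ((habs1.comp_aemeasurable (hf1m k)).mul (hmeas _).aemeasurable)
  have hu2m : ∀ k, AEMeasurable (u2 k) := by
    intro k
    apply ENNReal.measurable_ofReal.comp_aemeasurable
    exact aemeasurable_const.mul
      ((habs2.comp_aemeasurable (hf2m k)).mul (hmeas _).aemeasurable)
  have hc1 : (0:ℝ) ≤ (1 - 2 ^ (p₁ - pm))⁻¹ := by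
    rw [inv_nonneg]; linarith
  have hc2 : (0:ℝ) ≤ (1 - 2 ^ (pp - p₂))⁻¹ := by
    rw [inv_nonneg]; linarith
  -- per-scale weak-type estimate
  have hkey : ∀ k : ℤ, (∫⁻ x, A k x) ≤ (∫⁻ x, u1 k x) + ∫⁻ x, u2 k x := by
    intro k
    have hsplit : f1 k + f2 k = f := by
      funext x
      by_cases hc : (2:ℝ) ^ (k - 2) < |f x| <;> simp [hf1, hf2, hc]
    have hae : ∀ᵐ x : Rn n, |T f x| ≤ |T (f1 k) x| + |T (f2 k) x| := by
      have h := hsub (f1 k) (f2 k)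
      rwa [hsplit] at h
    have hNnull : volume {x : Rn n | ¬ |T f x| ≤ |T (f1 k) x| + |T (f2 k) x|} = 0 :=
      ae_iff.mp hae
    have h2β : 2 * (2:ℝ) ^ (k - 2) = (2:ℝ) ^ (k - 1) := by
      rw [mul_comm, ← zpow_add_one₀ (by norm_num : (2:ℝ) ≠ 0),
        show k - 2 + 1 = k - 1 by ring]
    have h2k : 2 * (2:ℝ) ^ (k - 1) = (2:ℝ) ^ k := by
      rw [mul_comm, ← zpow_add_one₀ (by norm_num : (2:ℝ) ≠ 0),
        show k - 1 + 1 = k by ring]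
    have hincl : {x : Rn n | (2:ℝ) ^ (k - 1) < |T f x|} ⊆
        ({x | (2:ℝ) ^ (k - 2) < |T (f1 k) x|} ∪ {x | (2:ℝ) ^ (k - 2) < |T (f2 k) x|}) ∪
          {x : Rn n | ¬ |T f x| ≤ |T (f1 k) x| + |T (f2 k) x|} := by
      intro x hx
      by_cases h1 : (2:ℝ) ^ (k - 2) < |T (f1 k) x|
      · exact Or.inl (Or.inl h1)
      by_cases h2 : (2:ℝ) ^ (k - 2) < |T (f2 k) x|
      · exact Or.inl (Or.inr h2)
      by_cases h3 : |T f x| ≤ |T (f1 k) x| + |T (f2 k) x|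
      · exfalso
        push_neg at h1 h2
        have hx' : (2:ℝ) ^ (k - 1) < |T f x| := hx
        linarith
      · exact Or.inr h3
    have hEsub : E k ⊆ {x : Rn n | (2:ℝ) ^ (k - 1) < |T f x|} := by
      intro x hx
      have h1 : (2:ℝ) ^ k < 2 * u x := hx.1
      have h2 : u x ≤ |T f x| := huT x
      simp only [Set.mem_setOf_eq]
      linarith
    calc (∫⁻ x, A k x)
        = ∫⁻ x in E k, ENNReal.ofReal (φ x ((2:ℝ) ^ (k + 1))) := by
          simp only [hA]
          exact lintegral_indicator (hEmeas k) _
      _ ≤ ∫⁻ x in {x : Rn n | (2:ℝ) ^ (k - 1) < |T f x|},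
            ENNReal.ofReal (φ x ((2:ℝ) ^ (k + 1))) :=
          lintegral_mono' (Measure.restrict_mono hEsub le_rfl) le_rfl
      _ ≤ ∫⁻ x, ENNReal.ofReal (φ x ((2:ℝ) ^ (k + 1)))
            ∂((volume.restrict {x | (2:ℝ) ^ (k - 2) < |T (f1 k) x|} +
                volume.restrict {x | (2:ℝ) ^ (k - 2) < |T (f2 k) x|}) +
              volume.restrict {x : Rn n | ¬ |T f x| ≤ |T (f1 k) x| + |T (f2 k) x|}) := by
          apply lintegral_mono' _ le_rfl
          calc volume.restrict {x : Rn n | (2:ℝ) ^ (k - 1) < |T f x|}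
              ≤ volume.restrict
                  (({x | (2:ℝ) ^ (k - 2) < |T (f1 k) x|} ∪
                    {x | (2:ℝ) ^ (k - 2) < |T (f2 k) x|}) ∪
                    {x : Rn n | ¬ |T f x| ≤ |T (f1 k) x| + |T (f2 k) x|}) :=
                Measure.restrict_mono hincl le_rfl
            _ ≤ _ := (Measure.restrict_union_le _ _).trans
                (add_le_add (Measure.restrict_union_le _ _) le_rfl)
      _ = (∫⁻ x in {x | (2:ℝ) ^ (k - 2) < |T (f1 k) x|},
              ENNReal.ofReal (φ x ((2:ℝ) ^ (k + 1)))) +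
            (∫⁻ x in {x | (2:ℝ) ^ (k - 2) < |T (f2 k) x|},
              ENNReal.ofReal (φ x ((2:ℝ) ^ (k + 1)))) := by
          rw [lintegral_add_measure, lintegral_add_measure,
            Measure.restrict_eq_zero.mpr hNnull, lintegral_zero_measure, add_zero]
      _ ≤ (ENNReal.ofReal (C₁ * ((2:ℝ) ^ (k - 2)) ^ (-p₁)) *
              ∫⁻ x, ENNReal.ofReal (|f1 k x| ^ p₁ * φ x ((2:ℝ) ^ (k + 1)))) +
            (ENNReal.ofReal (C₂ * ((2:ℝ) ^ (k - 2)) ^ (-p₂)) *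
              ∫⁻ x, ENNReal.ofReal (|f2 k x| ^ p₂ * φ x ((2:ℝ) ^ (k + 1)))) :=
          add_le_add
            (hweak₁ (f1 k) ((2:ℝ) ^ (k + 1)) (hτpos k) (hmem1 k)
              ((2:ℝ) ^ (k - 2)) (hβpos k))
            (hweak₂ (f2 k) ((2:ℝ) ^ (k + 1)) (hτpos k) (hmem2 k)
              ((2:ℝ) ^ (k - 2)) (hβpos k))
      _ = (∫⁻ x, u1 k x) + ∫⁻ x, u2 k x := by
          rw [← lintegral_const_mul' _ _ ENNReal.ofReal_ne_top,
            ← lintegral_const_mul' _ _ ENNReal.ofReal_ne_top]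
          simp only [hu1d, hu2d]
          congr 1
          · apply lintegral_congr
            intro x
            rw [← ENNReal.ofReal_mul (by positivity)]
          · apply lintegral_congr
            intro x
            rw [← ENNReal.ofReal_mul (by positivity)]
  -- summing the two families
  have hsum1 : ∀ x, (∑' k : ℤ, u1 k x) ≤
      ENNReal.ofReal ((C₁ * CL * CU * 16 ^ pp * (1 - 2 ^ (p₁ - pm))⁻¹) * φ x |f x|) := by
    intro x
    rcases (abs_nonneg (f x)).eq_or_lt with ha0 | ha
    · have hz : ∀ k : ℤ, u1 k x = 0 := by
        intro k
        have hnc : ¬ ((2:ℝ) ^ (k - 2) < |f x|) := by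
          rw [← ha0]; exact not_lt.mpr (hβpos k).le
        simp [hu1d, hf1, hnc, Real.zero_rpow hp₁.ne']
      rw [show (∑' k : ℤ, u1 k x) = 0 by simp [hz]]
      exact zero_le
    · have hb1 : ∀ k : ℤ, u1 k x ≤
          (if (2:ℝ) ^ (k - 2) < |f x| then
            ENNReal.ofReal (((2:ℝ) ^ (k - 2)) ^ (pm - p₁)) else 0) *
          ENNReal.ofReal ((C₁ * CL * CU * 16 ^ pp) * (|f x| ^ (p₁ - pm) * φ x |f x|)) := by
        intro k
        by_cases hc : (2:ℝ) ^ (k - 2) < |f x|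
        · rw [if_pos hc, ← ENNReal.ofReal_mul (by positivity)]
          simp only [hu1d, hf1, if_pos hc]
          apply ENNReal.ofReal_le_ofReal
          have hbb : ((2:ℝ) ^ (k - 2)) ^ (pm - p₁) =
              ((2:ℝ) ^ (k - 2)) ^ pm * ((2:ℝ) ^ (k - 2)) ^ (-p₁) := by
            rw [← Real.rpow_add (hβpos k)]; ring_nf
          have haa : |f x| ^ (p₁ - pm) = |f x| ^ p₁ * |f x| ^ (-pm) := by
            rw [← Real.rpow_add ha]; ring_nf
          calc C₁ * ((2:ℝ) ^ (k - 2)) ^ (-p₁) * (|f x| ^ p₁ * φ x ((2:ℝ) ^ (k + 1)))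
              ≤ C₁ * ((2:ℝ) ^ (k - 2)) ^ (-p₁) * (|f x| ^ p₁ *
                  (CL * CU * 16 ^ pp * ((2:ℝ) ^ (k - 2)) ^ pm *
                    |f x| ^ (-pm) * φ x |f x|)) := by
                apply mul_le_mul_of_nonneg_left _ (by positivity)
                exact mul_le_mul_of_nonneg_left (hP1 k x hc)
                  (Real.rpow_nonneg (abs_nonneg _) _)
            _ = (((2:ℝ) ^ (k - 2)) ^ pm * ((2:ℝ) ^ (k - 2)) ^ (-p₁)) *
                  ((C₁ * CL * CU * 16 ^ pp) * ((|f x| ^ p₁ * |f x| ^ (-pm)) * φ x |f x|)) := by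
                ring
            _ = ((2:ℝ) ^ (k - 2)) ^ (pm - p₁) *
                  ((C₁ * CL * CU * 16 ^ pp) * (|f x| ^ (p₁ - pm) * φ x |f x|)) := by
                rw [hbb, haa]
        · rw [if_neg hc, zero_mul]
          have hz1 : u1 k x = 0 := by
            simp [hu1d, hf1, hc, Real.zero_rpow hp₁.ne']
          rw [hz1]
      calc (∑' k : ℤ, u1 k x)
          ≤ ∑' k : ℤ, (if (2:ℝ) ^ (k - 2) < |f x| then
              ENNReal.ofReal (((2:ℝ) ^ (k - 2)) ^ (pm - p₁)) else 0) *
            ENNReal.ofReal ((C₁ * CL * CU * 16 ^ pp) * (|f x| ^ (p₁ - pm) * φ x |f x|)) :=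
            ENNReal.tsum_le_tsum hb1
        _ = (∑' k : ℤ, if (2:ℝ) ^ (k - 2) < |f x| then
              ENNReal.ofReal (((2:ℝ) ^ (k - 2)) ^ (pm - p₁)) else 0) *
            ENNReal.ofReal ((C₁ * CL * CU * 16 ^ pp) * (|f x| ^ (p₁ - pm) * φ x |f x|)) :=
            ENNReal.tsum_mul_right
        _ ≤ ENNReal.ofReal ((1 - 2 ^ (-(pm - p₁)))⁻¹ * |f x| ^ (pm - p₁)) *
            ENNReal.ofReal ((C₁ * CL * CU * 16 ^ pp) * (|f x| ^ (p₁ - pm) * φ x |f x|)) := by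
            apply mul_le_mul_left
            have hre := (Equiv.subRight (2:ℤ)).tsum_eq
              (f := fun j : ℤ => if (2:ℝ) ^ j < |f x| then
                ENNReal.ofReal (((2:ℝ) ^ j) ^ (pm - p₁)) else 0)
            simp only [Equiv.subRight_apply] at hre
            rw [hre]
            exact geom_sum_lt' (by linarith) ha
        _ = ENNReal.ofReal (((1 - 2 ^ (-(pm - p₁)))⁻¹ * |f x| ^ (pm - p₁)) *
              ((C₁ * CL * CU * 16 ^ pp) * (|f x| ^ (p₁ - pm) * φ x |f x|))) := by
            rw [← ENNReal.ofReal_mul]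
            have : (0:ℝ) ≤ (1 - 2 ^ (-(pm - p₁)))⁻¹ := by
              rw [show -(pm - p₁) = p₁ - pm by ring]; exact hc1
            positivity
        _ = ENNReal.ofReal ((C₁ * CL * CU * 16 ^ pp * (1 - 2 ^ (p₁ - pm))⁻¹) * φ x |f x|) := by
            congr 1
            rw [show -(pm - p₁) = p₁ - pm by ring]
            have hA1 : |f x| ^ (pm - p₁) * |f x| ^ (p₁ - pm) = 1 := by
              rw [← Real.rpow_add ha]; norm_num
            calc ((1 - 2 ^ (p₁ - pm))⁻¹ * |f x| ^ (pm - p₁)) *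
                  ((C₁ * CL * CU * 16 ^ pp) * (|f x| ^ (p₁ - pm) * φ x |f x|))
                = (|f x| ^ (pm - p₁) * |f x| ^ (p₁ - pm)) *
                    ((1 - 2 ^ (p₁ - pm))⁻¹ * ((C₁ * CL * CU * 16 ^ pp) * φ x |f x|)) := by
                  ring
              _ = (C₁ * CL * CU * 16 ^ pp * (1 - 2 ^ (p₁ - pm))⁻¹) * φ x |f x| := by
                  rw [hA1]; ring
  have hsum2 : ∀ x, (∑' k : ℤ, u2 k x) ≤
      ENNReal.ofReal ((C₂ * CU * 16 ^ pp * (1 - 2 ^ (pp - p₂))⁻¹) * φ x |f x|) := by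
    intro x
    rcases (abs_nonneg (f x)).eq_or_lt with ha0 | ha
    · have hz : ∀ k : ℤ, u2 k x = 0 := by
        intro k
        have hnc : ¬ ((2:ℝ) ^ (k - 2) < |f x|) := by
          rw [← ha0]; exact not_lt.mpr (hβpos k).le
        have hfx : |f x| ^ p₂ = 0 := by rw [← ha0, Real.zero_rpow hp₂.ne']
        simp [hu2d, hf2, hnc, hfx]
      rw [show (∑' k : ℤ, u2 k x) = 0 by simp [hz]]
      exact zero_le
    · have hb2 : ∀ k : ℤ, u2 k x ≤
          (if |f x| ≤ (2:ℝ) ^ (k - 2) then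
            ENNReal.ofReal (((2:ℝ) ^ (k - 2)) ^ (pp - p₂)) else 0) *
          ENNReal.ofReal ((C₂ * CU * 16 ^ pp) * (|f x| ^ (p₂ - pp) * φ x |f x|)) := by
        intro k
        by_cases hc : (2:ℝ) ^ (k - 2) < |f x|
        · rw [if_neg (not_le.mpr hc), zero_mul]
          have hz1 : u2 k x = 0 := by
            simp [hu2d, hf2, hc, Real.zero_rpow hp₂.ne']
          rw [hz1]
        · push_neg at hc
          rw [if_pos hc, ← ENNReal.ofReal_mul (by positivity)]
          simp only [hu2d, hf2, if_neg (not_lt.mpr hc)]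
          apply ENNReal.ofReal_le_ofReal
          have hbb : ((2:ℝ) ^ (k - 2)) ^ (pp - p₂) =
              ((2:ℝ) ^ (k - 2)) ^ pp * ((2:ℝ) ^ (k - 2)) ^ (-p₂) := by
            rw [← Real.rpow_add (hβpos k)]; ring_nf
          have haa : |f x| ^ (p₂ - pp) = |f x| ^ p₂ * |f x| ^ (-pp) := by
            rw [← Real.rpow_add ha]; ring_nf
          calc C₂ * ((2:ℝ) ^ (k - 2)) ^ (-p₂) * (|f x| ^ p₂ * φ x ((2:ℝ) ^ (k + 1)))
              ≤ C₂ * ((2:ℝ) ^ (k - 2)) ^ (-p₂) * (|f x| ^ p₂ *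
                  (CU * 16 ^ pp * ((2:ℝ) ^ (k - 2)) ^ pp *
                    |f x| ^ (-pp) * φ x |f x|)) := by
                apply mul_le_mul_of_nonneg_left _ (by positivity)
                exact mul_le_mul_of_nonneg_left (hP2 k x ha hc)
                  (Real.rpow_nonneg (abs_nonneg _) _)
            _ = (((2:ℝ) ^ (k - 2)) ^ pp * ((2:ℝ) ^ (k - 2)) ^ (-p₂)) *
                  ((C₂ * CU * 16 ^ pp) * ((|f x| ^ p₂ * |f x| ^ (-pp)) * φ x |f x|)) := by
                ring
            _ = ((2:ℝ) ^ (k - 2)) ^ (pp - p₂) *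
                  ((C₂ * CU * 16 ^ pp) * (|f x| ^ (p₂ - pp) * φ x |f x|)) := by
                rw [hbb, haa]
      calc (∑' k : ℤ, u2 k x)
          ≤ ∑' k : ℤ, (if |f x| ≤ (2:ℝ) ^ (k - 2) then
              ENNReal.ofReal (((2:ℝ) ^ (k - 2)) ^ (pp - p₂)) else 0) *
            ENNReal.ofReal ((C₂ * CU * 16 ^ pp) * (|f x| ^ (p₂ - pp) * φ x |f x|)) :=
            ENNReal.tsum_le_tsum hb2
        _ = (∑' k : ℤ, if |f x| ≤ (2:ℝ) ^ (k - 2) then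
              ENNReal.ofReal (((2:ℝ) ^ (k - 2)) ^ (pp - p₂)) else 0) *
            ENNReal.ofReal ((C₂ * CU * 16 ^ pp) * (|f x| ^ (p₂ - pp) * φ x |f x|)) :=
            ENNReal.tsum_mul_right
        _ ≤ ENNReal.ofReal ((1 - 2 ^ (pp - p₂))⁻¹ * |f x| ^ (pp - p₂)) *
            ENNReal.ofReal ((C₂ * CU * 16 ^ pp) * (|f x| ^ (p₂ - pp) * φ x |f x|)) := by
            apply mul_le_mul_left
            have hre := (Equiv.subRight (2:ℤ)).tsum_eq
              (f := fun j : ℤ => if |f x| ≤ (2:ℝ) ^ j then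
                ENNReal.ofReal (((2:ℝ) ^ j) ^ (pp - p₂)) else 0)
            simp only [Equiv.subRight_apply] at hre
            rw [hre]
            exact geom_sum_ge' (by linarith) ha
        _ = ENNReal.ofReal (((1 - 2 ^ (pp - p₂))⁻¹ * |f x| ^ (pp - p₂)) *
              ((C₂ * CU * 16 ^ pp) * (|f x| ^ (p₂ - pp) * φ x |f x|))) := by
            rw [← ENNReal.ofReal_mul]
            positivity
        _ = ENNReal.ofReal ((C₂ * CU * 16 ^ pp * (1 - 2 ^ (pp - p₂))⁻¹) * φ x |f x|) := by
            congr 1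
            have hA1 : |f x| ^ (pp - p₂) * |f x| ^ (p₂ - pp) = 1 := by
              rw [← Real.rpow_add ha]; norm_num
            calc ((1 - 2 ^ (pp - p₂))⁻¹ * |f x| ^ (pp - p₂)) *
                  ((C₂ * CU * 16 ^ pp) * (|f x| ^ (p₂ - pp) * φ x |f x|))
                = (|f x| ^ (pp - p₂) * |f x| ^ (p₂ - pp)) *
                    ((1 - 2 ^ (pp - p₂))⁻¹ * ((C₂ * CU * 16 ^ pp) * φ x |f x|)) := by
                  ring
              _ = (C₂ * CU * 16 ^ pp * (1 - 2 ^ (pp - p₂))⁻¹) * φ x |f x| := by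
                  rw [hA1]; ring
  -- final assembly
  calc phiIntegral φ (T f)
      = ∫⁻ x, G x := hGint
    _ ≤ ∫⁻ x, ENNReal.ofReal (φ x (2 * u x)) := lintegral_mono hGu
    _ ≤ ∫⁻ x, ∑' k : ℤ, A k x := lintegral_mono hpt
    _ = ∑' k : ℤ, ∫⁻ x, A k x := lintegral_tsum fun k => (hAmeas k).aemeasurable
    _ ≤ ∑' k : ℤ, ((∫⁻ x, u1 k x) + ∫⁻ x, u2 k x) := ENNReal.tsum_le_tsum hkey
    _ = (∑' k : ℤ, ∫⁻ x, u1 k x) + ∑' k : ℤ, ∫⁻ x, u2 k x := ENNReal.tsum_add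
    _ = (∫⁻ x, ∑' k : ℤ, u1 k x) + ∫⁻ x, ∑' k : ℤ, u2 k x := by
        rw [lintegral_tsum hu1m, lintegral_tsum hu2m]
    _ ≤ (∫⁻ x, ENNReal.ofReal ((C₁ * CL * CU * 16 ^ pp * (1 - 2 ^ (p₁ - pm))⁻¹) * φ x |f x|)) +
        ∫⁻ x, ENNReal.ofReal ((C₂ * CU * 16 ^ pp * (1 - 2 ^ (pp - p₂))⁻¹) * φ x |f x|) :=
        add_le_add (lintegral_mono hsum1) (lintegral_mono hsum2)
    _ ≤ ENNReal.ofReal (C₁ * CL * CU * 16 ^ pp * (1 - 2 ^ (p₁ - pm))⁻¹) * phiIntegral φ f +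
        ENNReal.ofReal (C₂ * CU * 16 ^ pp * (1 - 2 ^ (pp - p₂))⁻¹) * phiIntegral φ f :=
        add_le_add (hIbound _ (mul_nonneg (by positivity) hc1))
          (hIbound _ (mul_nonneg (by positivity) hc2))
    _ = ENNReal.ofReal (C₁ * CL * CU * 16 ^ pp * (1 - 2 ^ (p₁ - pm))⁻¹ +
          C₂ * CU * 16 ^ pp * (1 - 2 ^ (pp - p₂))⁻¹) * phiIntegral φ f := by
        rw [← add_mul, ← ENNReal.ofReal_add (mul_nonneg (by positivity) hc1)
          (mul_nonneg (by positivity) hc2)]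

/-- Interpolation of Musielak–Orlicz type (Theorem 2.7). -/
theorem statement0 {n : ℕ} (φ : Rn n → ℝ → ℝ) (p₁ p₂ pm pp : ℝ)
    (hp₁ : 0 < p₁) (hp₁₂ : p₁ < p₂)
    (horlicz : ∀ x, IsOrliczFn (φ x)) (hmeas : ∀ t : ℝ, Measurable fun x => φ x t)
    (hlow : UniformLowerType φ pm) (hupp : UniformUpperType φ pp)
    (hp₁m : p₁ < pm) (hmp : pm ≤ pp) (hpp₂ : pp < p₂)
    (T : (Rn n → ℝ) → Rn n → ℝ)
    (hsub : ∀ f g : Rn n → ℝ, ∀ᵐ x : Rn n, |T (f + g) x| ≤ |T f x| + |T g x|)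
    (C₁ C₂ : ℝ) (hC₁ : 0 < C₁) (hC₂ : 0 < C₂)
    (hweak₁ : ∀ f : Rn n → ℝ, ∀ t : ℝ, 0 < t → MemLpw (fun x => φ x t) p₁ f →
      ∀ α : ℝ, 0 < α →
        (∫⁻ x in {x : Rn n | α < |T f x|}, ENNReal.ofReal (φ x t)) ≤
          ENNReal.ofReal (C₁ * α ^ (-p₁)) * ∫⁻ x, ENNReal.ofReal (|f x| ^ p₁ * φ x t))
    (hweak₂ : ∀ f : Rn n → ℝ, ∀ t : ℝ, 0 < t → MemLpw (fun x => φ x t) p₂ f →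
      ∀ α : ℝ, 0 < α →
        (∫⁻ x in {x : Rn n | α < |T f x|}, ENNReal.ofReal (φ x t)) ≤
          ENNReal.ofReal (C₂ * α ^ (-p₂)) * ∫⁻ x, ENNReal.ofReal (|f x| ^ p₂ * φ x t)) :
    ∃ C : ℝ, 0 < C ∧
      (∀ f : Rn n → ℝ, MemLphi φ f →
        phiIntegral φ (T f) ≤ ENNReal.ofReal C * phiIntegral φ f) ∧
      ∀ f : Rn n → ℝ, MemLphi φ f → LuxNorm φ (T f) ≤ C * LuxNorm φ f := by
  classical
  obtain ⟨CL, hCL, hlowC⟩ := hlow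
  obtain ⟨CU, hCU, huppC⟩ := hupp
  have hpm : 0 < pm := hp₁.trans hp₁m
  have hpp : 0 < pp := hpm.trans_le hmp
  have hgeo1 : (2:ℝ) ^ (p₁ - pm) < 1 :=
    Real.rpow_lt_one_of_one_lt_of_neg one_lt_two (by linarith)
  have hgeo2 : (2:ℝ) ^ (pp - p₂) < 1 :=
    Real.rpow_lt_one_of_one_lt_of_neg one_lt_two (by linarith)
  set Cm : ℝ := C₁ * CL * CU * 16 ^ pp * (1 - 2 ^ (p₁ - pm))⁻¹ +
      C₂ * CU * 16 ^ pp * (1 - 2 ^ (pp - p₂))⁻¹ with hCm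
  have hCmpos : 0 < Cm := by
    have h1 : (0:ℝ) < (1 - 2 ^ (p₁ - pm))⁻¹ := by rw [inv_pos]; linarith
    have h2 : (0:ℝ) < (1 - 2 ^ (pp - p₂))⁻¹ := by rw [inv_pos]; linarith
    have h16 : (0:ℝ) < 16 ^ pp := Real.rpow_pos_of_pos (by norm_num) _
    have hh1 := mul_pos (mul_pos (mul_pos (mul_pos hC₁ hCL) hCU) h16) h1
    have hh2 := mul_pos (mul_pos (mul_pos hC₂ hCU) h16) h2
    rw [hCm]; linarith
  -- the modular inequality, for all dilates of φ
  have hmod : ∀ c : ℝ, 0 < c → ∀ g : Rn n → ℝ, AEMeasurable g →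
      (∫⁻ x, ENNReal.ofReal (φ x (|g x| / c))) < ∞ →
      (∫⁻ x, ENNReal.ofReal (φ x (|T g x| / c))) ≤
        ENNReal.ofReal Cm * ∫⁻ x, ENNReal.ofReal (φ x (|g x| / c)) := by
    intro c hc g hgm hgint
    have horlicz' : ∀ x, IsOrliczFn (fun t => φ x (t / c)) := by
      intro x
      refine ⟨?_, ?_, ?_, ?_⟩
      · intro s t hs hst
        exact (horlicz x).mono (div_nonneg hs hc.le) (by gcongr)
      · show φ x (0 / c) = 0
        rw [zero_div]; exact (horlicz x).map_zero
      · intro t ht; exact (horlicz x).pos _ (div_pos ht hc)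
      · exact (horlicz x).tendsto_atTop.comp (tendsto_id.atTop_div_const hc)
    have hlow' : ∀ (x : Rn n) (t s : ℝ), 0 ≤ t → 0 ≤ s → s ≤ 1 →
        φ x ((s * t) / c) ≤ CL * s ^ pm * φ x (t / c) := by
      intro x t s ht hs hs1
      rw [mul_div_assoc]
      exact hlowC x (t / c) s (by positivity) hs hs1
    have hupp' : ∀ (x : Rn n) (t s : ℝ), 0 ≤ t → 1 ≤ s →
        φ x ((s * t) / c) ≤ CU * s ^ pp * φ x (t / c) := by
      intro x t s ht hs
      rw [mul_div_assoc]
      exact huppC x (t / c) s (by positivity) hs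
    have h := modular_bound (fun x t => φ x (t / c)) hp₁ hp₁m hmp hpp₂ horlicz'
      (fun t => hmeas (t / c)) hCL hCU hlow' hupp' hC₁ hC₂ T hsub
      (fun f t ht hm α hα => hweak₁ f (t / c) (div_pos ht hc) hm α hα)
      (fun f t ht hm α hα => hweak₂ f (t / c) (div_pos ht hc) hm α hα)
      g ⟨hgm, by simpa [phiIntegral] using hgint⟩
    rw [← hCm] at h
    simpa [phiIntegral] using h
  have hmod1 : ∀ g : Rn n → ℝ, MemLphi φ g →
      phiIntegral φ (T g) ≤ ENNReal.ofReal Cm * phiIntegral φ g := by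
    intro g hg
    have h := hmod 1 one_pos g hg.1 (by simpa [phiIntegral] using hg.2)
    simpa [phiIntegral] using h
  -- the constant κ for the norm bound
  set κ : ℝ := max 1 ((Cm * CL) ^ (1 / pm)) with hκd
  have hκ1 : 1 ≤ κ := le_max_left _ _
  have hκpos : 0 < κ := lt_of_lt_of_le one_pos hκ1
  have hκpm : Cm * CL ≤ κ ^ pm := by
    calc Cm * CL = ((Cm * CL) ^ (1 / pm)) ^ pm := by
          rw [← Real.rpow_mul (by positivity), one_div, inv_mul_cancel₀ hpm.ne',
            Real.rpow_one]
      _ ≤ κ ^ pm := Real.rpow_le_rpow (by positivity) (le_max_right _ _) hpm.le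
  -- scaling estimate
  have hscale : ∀ (g : Rn n → ℝ) (lam c : ℝ), 0 < lam → 1 ≤ c →
      (∫⁻ x, ENNReal.ofReal (φ x (|g x| / (c * lam)))) ≤
        ENNReal.ofReal (CL * c ^ (-pm)) * ∫⁻ x, ENNReal.ofReal (φ x (|g x| / lam)) := by
    intro g lam c hlam hc
    have hc0 : (0:ℝ) < c := lt_of_lt_of_le one_pos hc
    have hptw : ∀ x, ENNReal.ofReal (φ x (|g x| / (c * lam))) ≤
        ENNReal.ofReal (CL * c ^ (-pm)) * ENNReal.ofReal (φ x (|g x| / lam)) := by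
      intro x
      rw [← ENNReal.ofReal_mul (by positivity)]
      apply ENNReal.ofReal_le_ofReal
      have hrw : |g x| / (c * lam) = c⁻¹ * (|g x| / lam) := by
        field_simp
      have hinv1 : c⁻¹ ≤ 1 := by
        rw [inv_eq_one_div]
        exact (div_le_one hc0).mpr hc
      rw [hrw, mul_assoc]
      calc φ x (c⁻¹ * (|g x| / lam)) ≤ CL * (c⁻¹) ^ pm * φ x (|g x| / lam) :=
            hlowC x _ _ (by positivity) (by positivity) hinv1
        _ = CL * (c ^ (-pm) * φ x (|g x| / lam)) := by
            rw [Real.inv_rpow hc0.le, ← Real.rpow_neg hc0.le, mul_assoc]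
    calc (∫⁻ x, ENNReal.ofReal (φ x (|g x| / (c * lam))))
        ≤ ∫⁻ x, ENNReal.ofReal (CL * c ^ (-pm)) * ENNReal.ofReal (φ x (|g x| / lam)) :=
          lintegral_mono hptw
      _ = ENNReal.ofReal (CL * c ^ (-pm)) * ∫⁻ x, ENNReal.ofReal (φ x (|g x| / lam)) :=
          lintegral_const_mul' _ _ ENNReal.ofReal_ne_top
  set C : ℝ := max Cm κ with hCd
  refine ⟨C, lt_of_lt_of_le hCmpos (le_max_left _ _), ?_, ?_⟩
  · intro g hg
    exact (hmod1 g hg).trans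
      (mul_le_mul_left (ENNReal.ofReal_le_ofReal (le_max_left _ _)) _)
  · intro g hg
    -- nonemptiness of the defining set for LuxNorm φ g
    have hIg : phiIntegral φ g < ∞ := hg.2
    set M : ℝ := max 1 (phiIntegral φ g).toReal with hMd
    have hM1 : (1:ℝ) ≤ M := le_max_left _ _
    have hM0 : (0:ℝ) < M := lt_of_lt_of_le one_pos hM1
    set lam0 : ℝ := max 1 ((CL * M) ^ (1 / pm)) with hlam0d
    have hlam01 : (1:ℝ) ≤ lam0 := le_max_left _ _
    have hlam0pos : (0:ℝ) < lam0 := lt_of_lt_of_le one_pos hlam01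
    have hlam0pm : CL * M ≤ lam0 ^ pm := by
      calc CL * M = ((CL * M) ^ (1 / pm)) ^ pm := by
            rw [← Real.rpow_mul (by positivity), one_div, inv_mul_cancel₀ hpm.ne',
              Real.rpow_one]
        _ ≤ lam0 ^ pm := Real.rpow_le_rpow (by positivity) (le_max_right _ _) hpm.le
    have hlam0mem : 0 < lam0 ∧ (∫⁻ x, ENNReal.ofReal (φ x (|g x| / lam0))) ≤ 1 := by
      refine ⟨hlam0pos, ?_⟩
      have h1 : (∫⁻ x, ENNReal.ofReal (φ x (|g x| / lam0))) ≤
          ENNReal.ofReal (CL * lam0 ^ (-pm)) * ∫⁻ x, ENNReal.ofReal (φ x (|g x| / 1)) := by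
        have := hscale g 1 lam0 one_pos hlam01
        simpa using this
      have h2 : (∫⁻ x, ENNReal.ofReal (φ x (|g x| / 1))) = phiIntegral φ g := by
        simp [phiIntegral]
      rw [h2] at h1
      have h3 : phiIntegral φ g = ENNReal.ofReal (phiIntegral φ g).toReal :=
        (ENNReal.ofReal_toReal hIg.ne).symm
      calc (∫⁻ x, ENNReal.ofReal (φ x (|g x| / lam0)))
          ≤ ENNReal.ofReal (CL * lam0 ^ (-pm)) * phiIntegral φ g := h1
        _ = ENNReal.ofReal (CL * lam0 ^ (-pm)) *
              ENNReal.ofReal ((phiIntegral φ g).toReal) := by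
            conv_lhs => rw [h3]
        _ = ENNReal.ofReal (CL * lam0 ^ (-pm) * (phiIntegral φ g).toReal) :=
            (ENNReal.ofReal_mul (by positivity)).symm
        _ ≤ 1 := by
            rw [ENNReal.ofReal_le_one]
            have htR : (phiIntegral φ g).toReal ≤ M := le_max_right _ _
            have hlam0pow : (0:ℝ) < lam0 ^ pm := Real.rpow_pos_of_pos hlam0pos _
            have hneg : lam0 ^ (-pm) = (lam0 ^ pm)⁻¹ := Real.rpow_neg hlam0pos.le _
            rw [hneg]
            have hle : (lam0 ^ pm)⁻¹ ≤ (CL * M)⁻¹ := by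
              apply inv_anti₀ (by positivity) hlam0pm
            calc CL * (lam0 ^ pm)⁻¹ * (phiIntegral φ g).toReal
                ≤ CL * (CL * M)⁻¹ * M := by
                  apply mul_le_mul (mul_le_mul_of_nonneg_left hle hCL.le) htR
                    ENNReal.toReal_nonneg (by positivity)
              _ = 1 := by field_simp
    -- κ * lam works for T g whenever lam works for g
    have hmain : ∀ lam : ℝ, 0 < lam →
        (∫⁻ x, ENNReal.ofReal (φ x (|g x| / lam))) ≤ 1 →
        0 < κ * lam ∧ (∫⁻ x, ENNReal.ofReal (φ x (|T g x| / (κ * lam)))) ≤ 1 := by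
      intro lam hlampos hlamle
      have hkl : 0 < κ * lam := by positivity
      have hg' : (∫⁻ x, ENNReal.ofReal (φ x (|g x| / (κ * lam)))) ≤
          ENNReal.ofReal (CL * κ ^ (-pm)) := by
        calc (∫⁻ x, ENNReal.ofReal (φ x (|g x| / (κ * lam))))
            ≤ ENNReal.ofReal (CL * κ ^ (-pm)) *
                ∫⁻ x, ENNReal.ofReal (φ x (|g x| / lam)) := hscale g lam κ hlampos hκ1
          _ ≤ ENNReal.ofReal (CL * κ ^ (-pm)) * 1 := mul_le_mul_right hlamle _
          _ = ENNReal.ofReal (CL * κ ^ (-pm)) := mul_one _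
      have hfin' : (∫⁻ x, ENNReal.ofReal (φ x (|g x| / (κ * lam)))) < ∞ :=
        lt_of_le_of_lt hg' ENNReal.ofReal_lt_top
      refine ⟨hkl, ?_⟩
      calc (∫⁻ x, ENNReal.ofReal (φ x (|T g x| / (κ * lam))))
          ≤ ENNReal.ofReal Cm * ∫⁻ x, ENNReal.ofReal (φ x (|g x| / (κ * lam))) :=
            hmod (κ * lam) hkl g hg.1 hfin'
        _ ≤ ENNReal.ofReal Cm * ENNReal.ofReal (CL * κ ^ (-pm)) := mul_le_mul_right hg' _
        _ = ENNReal.ofReal (Cm * (CL * κ ^ (-pm))) := (ENNReal.ofReal_mul hCmpos.le).symm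
        _ ≤ 1 := by
            rw [ENNReal.ofReal_le_one]
            have hneg : κ ^ (-pm) = (κ ^ pm)⁻¹ := Real.rpow_neg hκpos.le _
            have hκpow : (0:ℝ) < κ ^ pm := Real.rpow_pos_of_pos hκpos _
            rw [hneg, show Cm * (CL * (κ ^ pm)⁻¹) = (Cm * CL) / κ ^ pm by ring,
              div_le_one hκpow]
            exact hκpm
    -- conclude the Luxembourg-norm bound
    have hTle : ∀ lam : ℝ, 0 < lam →
        (∫⁻ x, ENNReal.ofReal (φ x (|g x| / lam))) ≤ 1 →
        LuxNorm φ (T g) ≤ κ * lam := by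
      intro lam h1 h2
      obtain ⟨hm1, hm2⟩ := hmain lam h1 h2
      apply csInf_le ⟨0, fun c hc => hc.1.le⟩
      exact ⟨hm1, hm2⟩
    have hLgnn : 0 ≤ LuxNorm φ g :=
      Real.sInf_nonneg fun c hc => hc.1.le
    have hLfg : LuxNorm φ (T g) / κ ≤ LuxNorm φ g := by
      apply le_csInf ⟨lam0, hlam0mem⟩
      rintro lam ⟨h1, h2⟩
      rw [div_le_iff₀ hκpos, mul_comm]
      exact hTle lam h1 h2
    calc LuxNorm φ (T g) = LuxNorm φ (T g) / κ * κ := by field_simp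
      _ ≤ LuxNorm φ g * κ := mul_le_mul_of_nonneg_right hLfg hκpos.le
      _ = κ * LuxNorm φ g := mul_comm _ _
      _ ≤ C * LuxNorm φ g := mul_le_mul_of_nonneg_right (le_max_right Cm κ) hLgnn
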